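/- Fix τ ∈ [-1, 1), s ∈ [1/2, 2], and for ε > 0 set S(ε) := Σ_{n∈ℤ} ε · e^{2nε}/(e^{2nε} - 2τ s^{-1} e^{nε} + s^{-2})^2. Then as ε → 0^+, S(ε) converges to the finite integral I(τ, s) := ∫_0^∞ r/(r^2 - 2τ s^{-1} r + s^{-2})^2 dr. -/

import Mathlib

open MeasureTheory Filter Set Real Topology

/-!
The substitution `r = eˣ` turns the integral into `∫ x, g x` over the whole line, with
`g x = e²ˣ / Q(eˣ)²` and `Q(r) = r² - 2τs⁻¹r + s⁻²`, and `S(ε) = ∑ₙ ε g(nε)` is the integral of the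
step function `x ↦ g(ε⌊x/ε⌋)`. As `τ < 1`, `Q(r) ≥ c (1 + r²)` for `r ≥ 0`, whence
`g x ≤ C (1 + x²)⁻¹`; since `|x - ε⌊x/ε⌋| ≤ 1` for `ε ≤ 1`, the step functions are dominated by
`3C (1 + x²)⁻¹`, and dominated convergence gives `S(ε) → ∫ g`.
-/

section RiemannSum

variable {E : Type*} [NormedAddCommGroup E] [NormedSpace ℝ E]

theorem integral_Ioi_zero_eq_integral_comp_exp (f : ℝ → E) :
    ∫ r in Ioi (0 : ℝ), f r = ∫ x, exp x • f (exp x) := by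
  have h := integral_image_eq_integral_abs_deriv_smul MeasurableSet.univ
    (fun x _ => (hasDerivAt_exp x).hasDerivWithinAt) exp_injective.injOn f
  simpa only [image_univ, range_exp, Measure.restrict_univ, abs_of_pos (exp_pos _)] using h

theorem integral_comp_floor [CompleteSpace E] (h : ℤ → E) (hint : Integrable fun t : ℝ => h ⌊t⌋) :
    ∫ t : ℝ, h ⌊t⌋ = ∑' n, h n := by
  rw [← setIntegral_univ, ← iUnion_Ico_intCast, integral_iUnion (fun _ => measurableSet_Ico)
    (pairwise_disjoint_Ico_intCast ℝ) hint.integrableOn]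
  refine tsum_congr fun n => ?_
  rw [setIntegral_congr_fun measurableSet_Ico (g := fun _ => h n)
    (fun t ht => by simp only [Int.floor_eq_iff.2 ht]), setIntegral_const]
  simp

theorem integral_comp_mul_floor_div [CompleteSpace E] (g : ℝ → E) {ε : ℝ} (hε : 0 < ε)
    (hint : Integrable fun x => g (ε * ⌊x / ε⌋)) :
    ∫ x, g (ε * ⌊x / ε⌋) = ∑' n : ℤ, ε • g (n * ε) := by
  have hint' : Integrable fun t : ℝ => g (ε * ⌊t⌋) := by
    simpa [hε.ne'] using hint.comp_mul_left' hε.ne'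
  have hsum : ∫ t : ℝ, g (ε * ⌊t⌋) = ∑' n : ℤ, g (ε * n) :=
    integral_comp_floor (fun n : ℤ => g (ε * n)) hint'
  rw [Measure.integral_comp_div (fun t => g (ε * ⌊t⌋)), hsum, abs_of_pos hε, ← tsum_const_smul'']
  simp only [mul_comm ε]

theorem mul_floor_div_mem_Ioc {ε : ℝ} (hε : 0 < ε) (x : ℝ) : ε * ⌊x / ε⌋ ∈ Ioc (x - ε) x := by
  have h₀ := Int.sub_floor_div_mul_nonneg x hε
  have h₁ := Int.sub_floor_div_mul_lt x hε
  constructor <;> linarith [mul_comm ε ⌊x / ε⌋]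

theorem tendsto_mul_floor_div (x : ℝ) :
    Tendsto (fun ε : ℝ => ε * ⌊x / ε⌋) (𝓝[>] 0) (𝓝 x) := by
  have hlow : Tendsto (fun ε : ℝ => x - ε) (𝓝[>] 0) (𝓝 x) := by
    simpa using ((continuous_sub_left x).tendsto 0).mono_left nhdsWithin_le_nhds
  refine tendsto_of_tendsto_of_tendsto_of_le_of_le' hlow tendsto_const_nhds ?_ ?_ <;>
    filter_upwards [self_mem_nhdsWithin] with ε hε
  exacts [(mul_floor_div_mem_Ioc hε x).1.le, (mul_floor_div_mem_Ioc hε x).2]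

theorem inv_one_add_sq_le_of_abs_sub_le {x y : ℝ} (h : |x - y| ≤ 1) :
    (1 + y ^ 2)⁻¹ ≤ 3 * (1 + x ^ 2)⁻¹ := by
  rw [← div_eq_mul_inv, le_div_iff₀ (by positivity), inv_mul_le_iff₀ (by positivity)]
  nlinarith [abs_le.1 h, sq_nonneg (x - 2 * y)]

theorem tendsto_riemannSum_integral [CompleteSpace E] {g : ℝ → E} (hg : Continuous g) {C : ℝ}
    (hdecay : ∀ x, ‖g x‖ ≤ C * (1 + x ^ 2)⁻¹) :
    Tendsto (fun ε : ℝ => ∑' n : ℤ, ε • g (n * ε)) (𝓝[>] 0) (𝓝 (∫ x, g x)) := by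
  set F : ℝ → ℝ → E := fun ε x => g (ε * ⌊x / ε⌋)
  have hC : 0 ≤ C := by simpa using (norm_nonneg _).trans (hdecay 0)
  have hmeas (ε : ℝ) : AEStronglyMeasurable (F ε) :=
    hg.comp_aestronglyMeasurable
      (by fun_prop : Measurable fun x : ℝ => ε * ⌊x / ε⌋).aestronglyMeasurable
  have hdom : ∀ᶠ ε in 𝓝[>] (0 : ℝ), ∀ x, ‖F ε x‖ ≤ 3 * C * (1 + x ^ 2)⁻¹ := by
    filter_upwards [Ioo_mem_nhdsGT one_pos] with ε hε x
    have hy := mul_floor_div_mem_Ioc hε.1 x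
    have hxy : |x - ε * ⌊x / ε⌋| ≤ 1 := abs_le.2 ⟨by linarith [hy.2], by linarith [hy.1, hε.2]⟩
    calc ‖F ε x‖ ≤ C * (1 + (ε * ⌊x / ε⌋) ^ 2)⁻¹ := hdecay _
      _ ≤ C * (3 * (1 + x ^ 2)⁻¹) := by gcongr; exact inv_one_add_sq_le_of_abs_sub_le hxy
      _ = 3 * C * (1 + x ^ 2)⁻¹ := by ring
  have hbound : Integrable fun x : ℝ => 3 * C * (1 + x ^ 2)⁻¹ :=
    integrable_inv_one_add_sq.const_mul _
  have hlim : Tendsto (fun ε => ∫ x, F ε x) (𝓝[>] 0) (𝓝 (∫ x, g x)) :=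
    tendsto_integral_filter_of_dominated_convergence _ (.of_forall hmeas)
      (hdom.mono fun ε h => .of_forall h) hbound
      (.of_forall fun x => (hg.tendsto x).comp (tendsto_mul_floor_div x))
  refine hlim.congr' ?_
  filter_upwards [hdom, self_mem_nhdsWithin] with ε hε hε₀
  exact integral_comp_mul_floor_div g hε₀ (hbound.mono' (hmeas ε) (.of_forall hε))

end RiemannSum

theorem min_mul_one_add_sq_le {τ b r : ℝ} (hτ : τ < 1) (hb : 0 < b) (hr : 0 ≤ r) :
    min 1 (1 - τ) * min 1 (b ^ 2) * (1 + r ^ 2) ≤ r ^ 2 - 2 * τ * b * r + b ^ 2 := by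
  have hquad : min 1 (1 - τ) * (r ^ 2 + b ^ 2) ≤ r ^ 2 - 2 * τ * b * r + b ^ 2 := by
    rcases le_or_gt τ 0 with hτ₀ | hτ₀
    · have := mul_nonneg (mul_nonneg (neg_nonneg.2 hτ₀) hb.le) hr
      nlinarith [min_le_left 1 (1 - τ)]
    · nlinarith [min_le_right 1 (1 - τ), mul_nonneg hτ₀.le (sq_nonneg (r - b))]
  have hsum : min 1 (b ^ 2) * (1 + r ^ 2) ≤ r ^ 2 + b ^ 2 := by
    nlinarith [min_le_left 1 (b ^ 2), min_le_right 1 (b ^ 2)]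
  calc min 1 (1 - τ) * min 1 (b ^ 2) * (1 + r ^ 2)
      = min 1 (1 - τ) * (min 1 (b ^ 2) * (1 + r ^ 2)) := mul_assoc ..
    _ ≤ min 1 (1 - τ) * (r ^ 2 + b ^ 2) := by gcongr
    _ ≤ _ := hquad

theorem min_mul_one_add_sq_pos {τ b : ℝ} (hτ : τ < 1) (hb : 0 < b) :
    0 < min 1 (1 - τ) * min 1 (b ^ 2) := by
  have : 0 < 1 - τ := sub_pos.2 hτ
  positivity

theorem sq_sub_two_mul_add_sq_pos {τ b r : ℝ} (hτ : τ < 1) (hb : 0 < b) (hr : 0 ≤ r) :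
    0 < r ^ 2 - 2 * τ * b * r + b ^ 2 :=
  (mul_pos (min_mul_one_add_sq_pos hτ hb) (by positivity)).trans_le (min_mul_one_add_sq_le hτ hb hr)

theorem exp_div_one_add_exp_sq_le (x : ℝ) : exp x / (1 + exp x ^ 2) ≤ (1 + |x|)⁻¹ := by
  have hcosh : 1 + |x| ≤ exp x + exp (-x) := by
    rcases abs_cases x with ⟨h, -⟩ | ⟨h, -⟩ <;> rw [h]
    · linarith [add_one_le_exp x, exp_pos (-x)]
    · linarith [add_one_le_exp (-x), exp_pos x]
  rw [div_le_iff₀ (by positivity), inv_mul_eq_div, le_div_iff₀ (by positivity)]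
  calc exp x * (1 + |x|) ≤ (exp x + exp (-x)) * exp x := by rw [mul_comm]; gcongr
    _ = 1 + exp x ^ 2 := by rw [add_mul, ← exp_add (-x), neg_add_cancel, exp_zero]; ring

noncomputable def expIntegrand (τ s x : ℝ) : ℝ :=
  exp x * (exp x / (exp x ^ 2 - 2 * τ * s⁻¹ * exp x + s⁻¹ ^ 2) ^ 2)

theorem continuous_expIntegrand {τ s : ℝ} (hτ : τ < 1) (hs : 0 < s) :
    Continuous (expIntegrand τ s) := by
  refine continuous_exp.mul (continuous_exp.div (by fun_prop) fun x => pow_ne_zero 2 ?_)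
  exact (sq_sub_two_mul_add_sq_pos hτ (inv_pos.2 hs) (exp_pos x).le).ne'

theorem norm_expIntegrand_le {τ s : ℝ} (hτ : τ < 1) (hs : 0 < s) (x : ℝ) :
    ‖expIntegrand τ s x‖ ≤ (min 1 (1 - τ) * min 1 (s⁻¹ ^ 2))⁻¹ ^ 2 * (1 + x ^ 2)⁻¹ := by
  set c := min 1 (1 - τ) * min 1 (s⁻¹ ^ 2)
  have hc : 0 < c := min_mul_one_add_sq_pos hτ (inv_pos.2 hs)
  have hden := min_mul_one_add_sq_le hτ (inv_pos.2 hs) (exp_pos x).le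
  have hsq : 1 + x ^ 2 ≤ (1 + |x|) ^ 2 := by nlinarith [sq_abs x, abs_nonneg x]
  calc ‖expIntegrand τ s x‖
      = exp x * (exp x / (exp x ^ 2 - 2 * τ * s⁻¹ * exp x + s⁻¹ ^ 2) ^ 2) :=
        Real.norm_of_nonneg (by unfold expIntegrand; positivity)
    _ ≤ exp x * (exp x / (c * (1 + exp x ^ 2)) ^ 2) := by gcongr
    _ = c⁻¹ ^ 2 * (exp x / (1 + exp x ^ 2)) ^ 2 := by field_simp
    _ ≤ c⁻¹ ^ 2 * ((1 + |x|)⁻¹) ^ 2 := by gcongr; exact exp_div_one_add_exp_sq_le x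
    _ ≤ c⁻¹ ^ 2 * (1 + x ^ 2)⁻¹ := by rw [inv_pow (1 + |x|)]; gcongr

theorem stmt_7 (τ s : ℝ) (hτ : τ ∈ Set.Ico (-1 : ℝ) 1) (hs : s ∈ Set.Icc (1/2 : ℝ) 2) :
    Tendsto
      (fun ε : ℝ => ∑' n : ℤ,
        ε * Real.exp (2 * (n : ℝ) * ε) /
          (Real.exp (2 * (n : ℝ) * ε) - 2 * τ * s⁻¹ * Real.exp ((n : ℝ) * ε) + (s⁻¹) ^ 2) ^ 2)
      (nhdsWithin 0 (Set.Ioi 0))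
      (nhds (∫ r in Set.Ioi (0 : ℝ),
        r / (r ^ 2 - 2 * τ * s⁻¹ * r + (s⁻¹) ^ 2) ^ 2)) := by
  have hs₀ : 0 < s := by linarith [hs.1]
  have hriemann := tendsto_riemannSum_integral (continuous_expIntegrand hτ.2 hs₀)
    (norm_expIntegrand_le hτ.2 hs₀)
  rw [integral_Ioi_zero_eq_integral_comp_exp]
  refine hriemann.congr fun ε => tsum_congr fun n => ?_
  have hexp : exp (2 * n * ε) = exp (n * ε) ^ 2 := by rw [sq, ← exp_add]; ring_nf
  rw [smul_eq_mul, expIntegrand, hexp]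
  ring
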